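/- Let φ₁, …, φ_m be linear functionals on C₁ and let M₁ = ⋂_{j=1}^m ker(φ_j), so that M = (M₁, C₂; α₁|_{M₁}, …, α_n|_{M₁}) is a reduced submodule of C. Then the map sending the line spanned by a nonzero c ∈ C₂ to the pair (span{d(c)}, span{c}) is a bijection from the set of one-dimensional subspaces span{c} of C₂ with φ_j(d(c)) = 0 for all j = 1, …, m onto the set of bristle submodules of M (equivalently, onto the set of bristle submodules (U₁, U₂) of C with U₁ ⊆ M₁). -/

import Mathlib

/-!
The canonical bristled `n`-Kronecker module `C = (C₁, C₂; α₁, …, α_n)`: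
`C₂ = Fin n → k` with standard basis `c_i`, and `C₁ = Sym2 (Fin n) → k` with
standard basis `c_{ij}`.  `α_r` is given by `(α_r x) i = x {i, r}`, and
`d(c) = Σ_{i≤j} λ_i λ_j c_{ij}` for `c = Σ λ_i c_i`.
Given linear functionals `φ₁, …, φ_m` on `C₁`, set `M₁ = ⋂_j ker φ_j`; then
`M = (M₁, C₂; α₁|_{M₁}, …, α_n|_{M₁})` is a reduced submodule of `C`, and its
bristle submodules are exactly the bristle submodules `(U₁, U₂)` of `C` with
`U₁ ⊆ M₁`.
-/

/-- The structure map `α_r : C₁ → C₂` of the canonical bristled module. -/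
def canAlpha (k : Type*) [Field k] (n : ℕ) (r : Fin n) :
    (Sym2 (Fin n) → k) →ₗ[k] (Fin n → k) where
  toFun x i := x (Sym2.mk i r)
  map_add' _ _ := rfl
  map_smul' _ _ := rfl

/-- `d(c) = Σ_{i ≤ j} λ_i λ_j c_{ij}` for `c = Σ_i λ_i c_i`. -/
def dvec {k : Type*} [Field k] {n : ℕ} (c : Fin n → k) : Sym2 (Fin n) → k :=
  Sym2.lift ⟨fun i j => c i * c j, fun i j => mul_comm (c i) (c j)⟩

/-- A bristle submodule of the canonical bristled module: a pair of
one-dimensional subspaces `(U₁ ⊆ C₁, U₂ ⊆ C₂)` with `α_r(U₁) ⊆ U₂` for all `r`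
and `α_r(U₁) ≠ 0` for at least one `r`. -/
def IsBristleSub {k : Type*} [Field k] {n : ℕ}
    (U₁ : Submodule k (Sym2 (Fin n) → k)) (U₂ : Submodule k (Fin n → k)) : Prop :=
  (∀ r, U₁.map (canAlpha k n r) ≤ U₂) ∧
    Module.finrank k U₁ = 1 ∧ Module.finrank k U₂ = 1 ∧
    ∃ r, U₁.map (canAlpha k n r) ≠ ⊥

/-- The set of lines `span{c} ⊆ C₂` (with `c ≠ 0`) such that
`φ_j(d(c)) = 0` for all `j`. -/
def lineSet {k : Type*} [Field k] {n m : ℕ}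
    (φ : Fin m → ((Sym2 (Fin n) → k) →ₗ[k] k)) : Set (Submodule k (Fin n → k)) :=
  {L | ∃ c : Fin n → k, c ≠ 0 ∧ L = Submodule.span k {c} ∧ ∀ j, φ j (dvec c) = 0}

/-- The set of bristle submodules `(U₁, U₂)` of `C` with `U₁ ⊆ M₁ = ⋂_j ker φ_j`;
these are exactly the bristle submodules of the submodule `M` of `C`. -/
def bristleSet {k : Type*} [Field k] {n m : ℕ}
    (φ : Fin m → ((Sym2 (Fin n) → k) →ₗ[k] k)) :
    Set (Submodule k (Sym2 (Fin n) → k) × Submodule k (Fin n → k)) :=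
  {p | IsBristleSub p.1 p.2 ∧ ∀ j, p.1 ≤ LinearMap.ker (φ j)}

/-!
A bristle `(U₁, U₂)` with `U₁ = span{x}`, `U₂ = span{u}` has `α_s x = μ_s u` for all `s`,
i.e. `x_{is} = μ_s u_i`. Symmetry of `x` gives `μ_s u_i = μ_i u_s`, so `μ` is a multiple
`t u` of `u` and `x = t d(u)`. Hence the bristles of `C` are exactly the pairs
`(span{d(c)}, span{c})`, and such a bristle lies in `M` iff `φ_j(d(c)) = 0` for all `j`.
-/

open Submodule Module

lemma Submodule.exists_ne_zero_eq_span_singleton_of_finrank_eq_one {k V : Type*} [Field k]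
    [AddCommGroup V] [Module k V] {U : Submodule k V} (h : finrank k U = 1) :
    ∃ v ≠ 0, U = span k {v} := by
  obtain ⟨v, hvU, hv, hle⟩ :=
    (rank_submodule_eq_one_iff U).1 (rank_eq_one_iff_finrank_eq_one.2 h)
  exact ⟨v, hv, le_antisymm hle ((span_singleton_le_iff_mem _ _).2 hvU)⟩

section Bristles

variable {k : Type*} [Field k] {n : ℕ}

@[simp]
lemma canAlpha_apply (r : Fin n) (x : Sym2 (Fin n) → k) (i : Fin n) :
    canAlpha k n r x i = x s(i, r) := rfl

@[simp]
lemma dvec_mk (c : Fin n → k) (i j : Fin n) : dvec c s(i, j) = c i * c j := rfl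

lemma eq_zero_of_forall_canAlpha_eq_zero {x : Sym2 (Fin n) → k}
    (hx : ∀ r, canAlpha k n r x = 0) : x = 0 := by
  funext z
  induction z using Sym2.ind with
  | _ i j => simpa using congrFun (hx j) i

lemma dvec_ne_zero {c : Fin n → k} (hc : c ≠ 0) : dvec c ≠ 0 := by
  obtain ⟨i, hi⟩ := Function.ne_iff.mp hc
  intro h
  exact hi (by simpa using congrFun h s(i, i))

lemma canAlpha_dvec (r : Fin n) (c : Fin n → k) : canAlpha k n r (dvec c) = c r • c := by
  funext i
  simp [mul_comm]

lemma dvec_smul (t : k) (c : Fin n → k) : dvec (t • c) = (t * t) • dvec c := by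
  funext z
  induction z using Sym2.ind with
  | _ i j =>
    simp only [dvec_mk, Pi.smul_apply, smul_eq_mul]
    ring

lemma span_image_dvec_span_singleton (c : Fin n → k) :
    span k (dvec '' (span k {c} : Set (Fin n → k))) = span k {dvec c} := by
  refine le_antisymm (span_le.2 ?_)
    (span_mono (by simpa using ⟨c, mem_span_singleton_self c, rfl⟩))
  rintro _ ⟨_, hy, rfl⟩
  obtain ⟨t, rfl⟩ := mem_span_singleton.1 hy
  rw [dvec_smul]
  exact smul_mem _ _ (mem_span_singleton_self _)

lemma exists_eq_smul_dvec_of_canAlpha_mem_span {x : Sym2 (Fin n) → k} {u : Fin n → k}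
    (hu : u ≠ 0) (hx : ∀ s, canAlpha k n s x ∈ span k {u}) : ∃ t : k, x = t • dvec u := by
  choose μ hμ using fun s => mem_span_singleton.1 (hx s)
  have hx_apply : ∀ i s, x s(i, s) = μ s * u i := fun i s => by
    simpa using (congrFun (hμ s) i).symm
  have hsym : ∀ i s, μ s * u i = μ i * u s := fun i s => by
    rw [← hx_apply, ← hx_apply, Sym2.eq_swap]
  obtain ⟨r, hr⟩ := Function.ne_iff.mp hu
  refine ⟨μ r / u r, funext fun z => ?_⟩
  induction z using Sym2.ind with
  | _ i j =>
    have hμj : μ j = μ r / u r * u j := by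
      rw [div_mul_eq_mul_div, eq_div_iff hr]
      exact hsym r j
    simp only [hx_apply, hμj, Pi.smul_apply, dvec_mk, smul_eq_mul]
    ring

lemma isBristleSub_span_dvec {c : Fin n → k} (hc : c ≠ 0) :
    IsBristleSub (span k {dvec c}) (span k {c}) := by
  obtain ⟨r, hr⟩ := Function.ne_iff.mp hc
  refine ⟨fun s => ?_, finrank_span_singleton (dvec_ne_zero hc), finrank_span_singleton hc,
    r, ?_⟩
  · rw [map_span, Set.image_singleton, canAlpha_dvec, span_singleton_le_iff_mem]
    exact smul_mem _ _ (mem_span_singleton_self c)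
  · rw [map_span, Set.image_singleton, canAlpha_dvec, Ne, span_singleton_eq_bot]
    exact smul_ne_zero hr hc

lemma isBristleSub_iff
    {U₁ : Submodule k (Sym2 (Fin n) → k)} {U₂ : Submodule k (Fin n → k)} :
    IsBristleSub U₁ U₂ ↔ ∃ c ≠ 0, U₁ = span k {dvec c} ∧ U₂ = span k {c} := by
  refine ⟨fun ⟨hmap, h₁, h₂, _⟩ => ?_,
    fun ⟨c, hc, h₁, h₂⟩ => h₁ ▸ h₂ ▸ isBristleSub_span_dvec hc⟩
  obtain ⟨x, hx, rfl⟩ := exists_ne_zero_eq_span_singleton_of_finrank_eq_one h₁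
  obtain ⟨u, hu, rfl⟩ := exists_ne_zero_eq_span_singleton_of_finrank_eq_one h₂
  have hαx : ∀ s, canAlpha k n s x ∈ span k {u} := fun s =>
    hmap s (mem_map_of_mem (mem_span_singleton_self x))
  obtain ⟨t, rfl⟩ := exists_eq_smul_dvec_of_canAlpha_mem_span hu hαx
  have ht : t ≠ 0 := by rintro rfl; simp at hx
  exact ⟨u, hu, span_singleton_smul_eq (IsUnit.mk0 t ht) _, rfl⟩

variable {m : ℕ} {φ : Fin m → ((Sym2 (Fin n) → k) →ₗ[k] k)}

lemma mem_bristleSet_of_mem_lineSet {L : Submodule k (Fin n → k)} (hL : L ∈ lineSet φ) :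
    (span k (dvec '' (L : Set (Fin n → k))), L) ∈ bristleSet φ := by
  obtain ⟨c, hc, rfl, hφ⟩ := hL
  rw [span_image_dvec_span_singleton]
  exact ⟨isBristleSub_span_dvec hc, fun j => (span_singleton_le_iff_mem _ _).2 (hφ j)⟩

lemma mem_lineSet_of_mem_bristleSet
    {p : Submodule k (Sym2 (Fin n) → k) × Submodule k (Fin n → k)} (hp : p ∈ bristleSet φ) :
    p.2 ∈ lineSet φ ∧ span k (dvec '' (p.2 : Set (Fin n → k))) = p.1 := by
  obtain ⟨hbristle, hker⟩ := hp
  obtain ⟨c, hc, h₁, h₂⟩ := isBristleSub_iff.1 hbristle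
  refine ⟨⟨c, hc, h₂, fun j => hker j (h₁ ▸ mem_span_singleton_self _)⟩, ?_⟩
  rw [h₂, span_image_dvec_span_singleton, h₁]

end Bristles

theorem bristle_submodules_of_kernel_submodule_general
    {k : Type*} [Field k] {n m : ℕ}
    (φ : Fin m → ((Sym2 (Fin n) → k) →ₗ[k] k)) :
    (∀ x ∈ ⨅ j, LinearMap.ker (φ j),
      (∀ r, canAlpha k n r x = 0) → x = 0) ∧
    ∃ F : lineSet φ → bristleSet φ,
      Function.Bijective F ∧
      ∀ (c : Fin n → k) (hc : c ≠ 0) (h0 : ∀ j, φ j (dvec c) = 0),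
        (F ⟨Submodule.span k {c}, ⟨c, hc, rfl, h0⟩⟩ :
            Submodule k (Sym2 (Fin n) → k) × Submodule k (Fin n → k))
          = (Submodule.span k {dvec c}, Submodule.span k {c}) := by
  refine ⟨fun _ _ => eq_zero_of_forall_canAlpha_eq_zero,
    fun L => ⟨_, mem_bristleSet_of_mem_lineSet L.2⟩, ⟨fun L L' h => ?_, fun p => ?_⟩,
    fun c _ _ => Prod.ext (span_image_dvec_span_singleton c) rfl⟩
  · exact Subtype.ext (congrArg (fun p : bristleSet φ => p.1.2) h)
  · obtain ⟨hL, h₁⟩ := mem_lineSet_of_mem_bristleSet p.2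
    exact ⟨⟨p.1.2, hL⟩, Subtype.ext (Prod.ext h₁ rfl)⟩

/-- With `M₁ = ⋂_j ker φ_j`, the module `M = (M₁, C₂; α_i|_{M₁})`
is a reduced submodule of `C`, and the map `span{c} ↦ (span{d(c)}, span{c})`
is a bijection from the set of lines `span{c} ⊆ C₂` with `φ_j(d(c)) = 0` for
all `j` onto the set of bristle submodules of `M`, i.e. bristle submodules
`(U₁, U₂)` of `C` with `U₁ ⊆ M₁`. -/
theorem bristle_submodules_of_kernel_submodule
    {k : Type*} [Field k] {n m : ℕ} (hn : 1 ≤ n)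
    (φ : Fin m → ((Sym2 (Fin n) → k) →ₗ[k] k)) :
    (∀ x ∈ ⨅ j, LinearMap.ker (φ j),
      (∀ r, canAlpha k n r x = 0) → x = 0) ∧
    ∃ F : lineSet φ → bristleSet φ,
      Function.Bijective F ∧
      ∀ (c : Fin n → k) (hc : c ≠ 0) (h0 : ∀ j, φ j (dvec c) = 0),
        (F ⟨Submodule.span k {c}, ⟨c, hc, rfl, h0⟩⟩ :
            Submodule k (Sym2 (Fin n) → k) × Submodule k (Fin n → k))
          = (Submodule.span k {dvec c}, Submodule.span k {c}) :=
  bristle_submodules_of_kernel_submodule_general φ
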